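/- Periodicity of Zwegers' μ-function: μ(u+1, v) = -μ(u,v) and μ(u, v+1) = -μ(u,v). -/
import Mathlib


open Complex Real

/-- The Jacobi theta function
`ϑ_{11}(v;τ) = ∑_{n∈ℤ} e^{2πi(n+1/2)(v+1/2) + πi(n+1/2)²τ}`. -/
noncomputable def theta11 (τ v : ℂ) : ℂ :=
  ∑' n : ℤ, Complex.exp (2 * (π : ℂ) * I * ((n : ℂ) + 1/2) * (v + 1/2) +
    (π : ℂ) * I * ((n : ℂ) + 1/2) ^ 2 * τ)

/-- Zwegers' μ-function
`μ(u,v;τ) = (e^{πiu}/ϑ_{11}(v)) ∑_{n∈ℤ} (-1)^n e^{2πinv} q^{n(n+1)/2}/(1 - e^{2πiu}q^n)`. -/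
noncomputable def zwegersMu (τ u v : ℂ) : ℂ :=
  Complex.exp ((π : ℂ) * I * u) / theta11 τ v *
    ∑' n : ℤ,
      (-1 : ℂ) ^ n * Complex.exp (2 * (π : ℂ) * I * (n : ℂ) * v) *
        Complex.exp (2 * (π : ℂ) * I * τ) ^ (n * (n + 1) / 2) /
        (1 - Complex.exp (2 * (π : ℂ) * I * u) * Complex.exp (2 * (π : ℂ) * I * τ) ^ n)


/-- Periodicity: `μ(u+1,v) = -μ(u,v)` and `μ(u,v+1) = -μ(u,v)`. -/
theorem zwegersMu_periodicity (τ u v : ℂ) (hτ : 0 < τ.im)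
    (hu : ∀ m n : ℤ, u ≠ (m : ℂ) + (n : ℂ) * τ)
    (hv : ∀ m n : ℤ, v ≠ (m : ℂ) + (n : ℂ) * τ) :
    zwegersMu τ (u + 1) v = -zwegersMu τ u v ∧
      zwegersMu τ u (v + 1) = -zwegersMu τ u v := by
  constructor
  · unfold zwegersMu
    rw [show (π : ℂ) * I * (u + 1) = π * I * u + π * I by ring, Complex.exp_add,
      Complex.exp_pi_mul_I,
      show 2 * (π : ℂ) * I * (u + 1) = 2 * π * I * u + 2 * π * I by ring, Complex.exp_add,
      Complex.exp_two_pi_mul_I, mul_one]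
    ring
  · unfold zwegersMu theta11
    have h1 : (∑' n : ℤ, Complex.exp (2 * (π : ℂ) * I * ((n : ℂ) + 1/2) * ((v + 1) + 1/2) +
        (π : ℂ) * I * ((n : ℂ) + 1/2) ^ 2 * τ)) =
        -∑' n : ℤ, Complex.exp (2 * (π : ℂ) * I * ((n : ℂ) + 1/2) * (v + 1/2) +
        (π : ℂ) * I * ((n : ℂ) + 1/2) ^ 2 * τ) := by
      rw [← tsum_neg]
      refine tsum_congr fun n => ?_
      rw [show 2 * (π : ℂ) * I * ((n : ℂ) + 1/2) * ((v + 1) + 1/2) +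
          (π : ℂ) * I * ((n : ℂ) + 1/2) ^ 2 * τ =
          (2 * (π : ℂ) * I * ((n : ℂ) + 1/2) * (v + 1/2) +
          (π : ℂ) * I * ((n : ℂ) + 1/2) ^ 2 * τ) + (n : ℂ) * (2 * π * I) + π * I by ring,
        Complex.exp_add, Complex.exp_add, Complex.exp_int_mul_two_pi_mul_I,
        Complex.exp_pi_mul_I]
      ring
    have h2 : ∀ n : ℤ, Complex.exp (2 * (π : ℂ) * I * (n : ℂ) * (v + 1)) =
        Complex.exp (2 * (π : ℂ) * I * (n : ℂ) * v) := fun n => by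
      rw [show 2 * (π : ℂ) * I * (n : ℂ) * (v + 1) =
          2 * (π : ℂ) * I * (n : ℂ) * v + (n : ℂ) * (2 * π * I) by ring,
        Complex.exp_add, Complex.exp_int_mul_two_pi_mul_I, mul_one]
    have h3 : (∑' n : ℤ, (-1 : ℂ) ^ n * Complex.exp (2 * (π : ℂ) * I * (n : ℂ) * (v + 1)) *
        Complex.exp (2 * (π : ℂ) * I * τ) ^ (n * (n + 1) / 2) /
        (1 - Complex.exp (2 * (π : ℂ) * I * u) * Complex.exp (2 * (π : ℂ) * I * τ) ^ n)) =
        ∑' n : ℤ, (-1 : ℂ) ^ n * Complex.exp (2 * (π : ℂ) * I * (n : ℂ) * v) *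
        Complex.exp (2 * (π : ℂ) * I * τ) ^ (n * (n + 1) / 2) /
        (1 - Complex.exp (2 * (π : ℂ) * I * u) * Complex.exp (2 * (π : ℂ) * I * τ) ^ n) :=
      tsum_congr fun n => by rw [h2 n]
    rw [h1, h3]
    ring
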